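/- The metric g = dx² + dy² − du(dv − (2v/x)dx + (8xh − v²/(4x²))du) on {(x,y,u,v) : x ≠ 0}, with h = h(x,y,u) independent of v, has vanishing Ricci tensor if and only if h_xx + h_yy = 0. -/

import Mathlib

noncomputable section

/-- Partial derivative on `ℝ⁴`. -/
def pd4 (f : (Fin 4 → ℝ) → ℝ) (i : Fin 4) (p : Fin 4 → ℝ) : ℝ :=
  fderiv ℝ f p (Pi.single i 1)

/-- Partial derivative on `ℝ³`. -/
def pd3 (f : (Fin 3 → ℝ) → ℝ) (i : Fin 3) (p : Fin 3 → ℝ) : ℝ :=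
  fderiv ℝ f p (Pi.single i 1)

/-- The Kundt wave metric
`g = dx² + dy² − du (dv − (2v/x) dx + (8xh − v²/(4x²)) du)`
in coordinates `(x,y,u,v) = (p 0, p 1, p 2, p 3)`, as a symmetric matrix;
here `h = h(x,y,u)` is independent of `v`. -/
def gKW (h : (Fin 3 → ℝ) → ℝ) (p : Fin 4 → ℝ) : Matrix (Fin 4) (Fin 4) ℝ :=
  !![1, 0, p 3 / p 0, 0;
     0, 1, 0, 0;
     p 3 / p 0, 0, -(8 * p 0 * h ![p 0, p 1, p 2] - (p 3) ^ 2 / (4 * (p 0) ^ 2)), -(1/2);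
     0, 0, -(1/2), 0]

/-- Christoffel symbols `Γ^k_{ij}` of the Levi-Civita connection of `gKW h`. -/
def christoffel (h : (Fin 3 → ℝ) → ℝ) (p : Fin 4 → ℝ) (k i j : Fin 4) : ℝ :=
  (1/2) * ∑ l, (gKW h p)⁻¹ k l *
    (pd4 (fun q => gKW h q l j) i p + pd4 (fun q => gKW h q l i) j p
      - pd4 (fun q => gKW h q i j) l p)

/-- The Ricci tensor `R_{ij}` of the metric `gKW h`. -/
def ricci (h : (Fin 3 → ℝ) → ℝ) (p : Fin 4 → ℝ) (i j : Fin 4) : ℝ :=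
  (∑ k, pd4 (fun q => christoffel h q k i j) k p)
    - (∑ k, pd4 (fun q => christoffel h q k i k) j p)
    + ∑ k, ∑ l, (christoffel h p k k l * christoffel h p l i j
      - christoffel h p k j l * christoffel h p l i k)

inductive KE where
  | C : ℝ → KE
  | X : KE
  | V : KE
  | invX : KE
  | hD : List (Fin 3) → KE
  | add : KE → KE → KE
  | mul : KE → KE → KE

namespace KE

/-- Iterated partial derivative of a function on `ℝ³`. -/
def pdI : List (Fin 3) → ((Fin 3 → ℝ) → ℝ) → ((Fin 3 → ℝ) → ℝ)
  | [], f => f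
  | i :: l, f => pd3 (pdI l f) i

/-- Evaluation of a symbolic expression. -/
def eval (h : (Fin 3 → ℝ) → ℝ) : KE → (Fin 4 → ℝ) → ℝ
  | C r, _ => r
  | X, p => p 0
  | V, p => p 3
  | invX, p => (p 0)⁻¹
  | hD l, p => pdI l h ![p 0, p 1, p 2]
  | add a b, p => eval h a p + eval h b p
  | mul a b, p => eval h a p * eval h b p

/-- Symbolic partial derivative. -/
def D : KE → Fin 4 → KE
  | C _, _ => C 0
  | X, i => if i = 0 then C 1 else C 0
  | V, i => if i = 3 then C 1 else C 0
  | invX, i => if i = 0 then mul (C (-1)) (mul invX invX) else C 0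
  | hD l, i =>
      if i = 0 then hD (0 :: l) else if i = 1 then hD (1 :: l)
      else if i = 2 then hD (2 :: l) else C 0
  | add a b, i => add (D a i) (D b i)
  | mul a b, i => add (mul (D a i) b) (mul a (D b i))

lemma contDiff_pd3 {f : (Fin 3 → ℝ) → ℝ} (hf : ContDiff ℝ (⊤ : ℕ∞) f) (i : Fin 3) :
    ContDiff ℝ (⊤ : ℕ∞) (pd3 f i) :=
  (hf.fderiv_right (by simp)).clm_apply contDiff_const

lemma contDiff_pdI {f : (Fin 3 → ℝ) → ℝ} (hf : ContDiff ℝ (⊤ : ℕ∞) f) (l : List (Fin 3)) :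
    ContDiff ℝ (⊤ : ℕ∞) (pdI l f) := by
  induction l with
  | nil => exact hf
  | cons i l ih => exact contDiff_pd3 ih i

/-- The projection `(x,y,u,v) ↦ (x,y,u)` as a continuous linear map. -/
def T : (Fin 4 → ℝ) →L[ℝ] (Fin 3 → ℝ) :=
  ContinuousLinearMap.pi
    ![ContinuousLinearMap.proj 0, ContinuousLinearMap.proj 1, ContinuousLinearMap.proj 2]

lemma T_apply (p : Fin 4 → ℝ) : T p = ![p 0, p 1, p 2] := by
  funext j
  fin_cases j <;> rfl

end KE

namespace KE

variable {h : (Fin 3 → ℝ) → ℝ}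

lemma T_single (i : Fin 4) :
    T (Pi.single i (1:ℝ)) =
      if hi : (i : ℕ) < 3 then Pi.single (⟨i, hi⟩ : Fin 3) (1:ℝ) else 0 := by
  fin_cases i <;>
    · rw [T_apply]
      funext j
      fin_cases j <;> simp

lemma hD_hasFDerivAt (hh : ContDiff ℝ (⊤ : ℕ∞) h) (l : List (Fin 3)) (p : Fin 4 → ℝ) :
    HasFDerivAt (eval h (hD l))
      ((fderiv ℝ (pdI l h) (T p)).comp T) p := by
  have h1 : HasFDerivAt (pdI l h) (fderiv ℝ (pdI l h) (T p)) (T p) :=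
    ((contDiff_pdI hh l).differentiable (by simp)).differentiableAt.hasFDerivAt
  have h2 := h1.comp p T.hasFDerivAt
  have : eval h (hD l) = (pdI l h) ∘ T := by
    funext q
    simp [eval, T_apply]
  rw [this]
  exact h2

lemma eval_diff (hh : ContDiff ℝ (⊤ : ℕ∞) h) (e : KE) (p : Fin 4 → ℝ) (hp : p 0 ≠ 0) :
    DifferentiableAt ℝ (eval h e) p ∧
      ∀ i, fderiv ℝ (eval h e) p (Pi.single i 1) = eval h (D e i) p := by
  induction e with
  | C r =>
      refine ⟨differentiableAt_const r, fun i => ?_⟩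
      simp [eval, D, fderiv_const]
  | X =>
      have : eval h X = fun p : Fin 4 → ℝ => p 0 := rfl
      refine ⟨?_, fun i => ?_⟩
      · exact (ContinuousLinearMap.proj 0 : (Fin 4 → ℝ) →L[ℝ] ℝ).differentiableAt
      · have : fderiv ℝ (eval h X) p = ContinuousLinearMap.proj 0 :=
          (ContinuousLinearMap.proj 0 : (Fin 4 → ℝ) →L[ℝ] ℝ).fderiv
        rw [this]
        fin_cases i <;> simp [eval, D]
  | V =>
      refine ⟨?_, fun i => ?_⟩
      · exact (ContinuousLinearMap.proj 3 : (Fin 4 → ℝ) →L[ℝ] ℝ).differentiableAt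
      · have : fderiv ℝ (eval h V) p = ContinuousLinearMap.proj 3 :=
          (ContinuousLinearMap.proj 3 : (Fin 4 → ℝ) →L[ℝ] ℝ).fderiv
        rw [this]
        fin_cases i <;> simp [eval, D]
  | invX =>
      have hfd : HasFDerivAt (eval h invX)
          ((-ContinuousLinearMap.mulLeftRight ℝ ℝ (p 0)⁻¹ (p 0)⁻¹).comp
            (ContinuousLinearMap.proj 0)) p :=
        (hasFDerivAt_inv' hp).comp p
          (ContinuousLinearMap.proj 0 : (Fin 4 → ℝ) →L[ℝ] ℝ).hasFDerivAt
      refine ⟨hfd.differentiableAt, fun i => ?_⟩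
      rw [hfd.fderiv]
      fin_cases i <;>
        simp [eval, D, ContinuousLinearMap.mulLeftRight_apply]
  | hD l =>
      have hfd := hD_hasFDerivAt hh l p
      refine ⟨hfd.differentiableAt, fun i => ?_⟩
      rw [hfd.fderiv]
      have := T_single i
      fin_cases i <;>
        simp only [ContinuousLinearMap.coe_comp', Function.comp_apply, T_single] <;>
        simp [eval, D, pdI, pd3, T_apply]
  | add a b iha ihb =>
      obtain ⟨da, fa⟩ := iha
      obtain ⟨db, fb⟩ := ihb
      refine ⟨da.add db, fun i => ?_⟩
      have : eval h (add a b) = fun q => eval h a q + eval h b q := rfl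
      rw [this, fderiv_fun_add da db]
      simp [fa i, fb i, eval, D]
  | mul a b iha ihb =>
      obtain ⟨da, fa⟩ := iha
      obtain ⟨db, fb⟩ := ihb
      refine ⟨da.mul db, fun i => ?_⟩
      have : eval h (mul a b) = fun q => eval h a q * eval h b q := rfl
      rw [this, fderiv_fun_mul da db]
      simp [fa i, fb i, eval, D]
      ring

lemma pd4_eval (hh : ContDiff ℝ (⊤ : ℕ∞) h) (e : KE) {p : Fin 4 → ℝ} (hp : p 0 ≠ 0) (i : Fin 4) :
    pd4 (eval h e) i p = eval h (D e i) p :=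
  (eval_diff hh e p hp).2 i

end KE

namespace KE

/-- The metric as a matrix of symbolic expressions. -/
def gE : Matrix (Fin 4) (Fin 4) KE :=
  !![C 1, C 0, mul V invX, C 0;
     C 0, C 1, C 0, C 0;
     mul V invX, C 0,
       add (mul (C (-8)) (mul X (hD []))) (mul (C (1/4)) (mul V (mul V (mul invX invX)))),
       C (-(1/2));
     C 0, C 0, C (-(1/2)), C 0]

lemma gKW_eval (h : (Fin 3 → ℝ) → ℝ) (p : Fin 4 → ℝ) (i j : Fin 4) :
    gKW h p i j = eval h (gE i j) p := by
  fin_cases i <;> fin_cases j <;>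
    (try simp [gKW, gE, eval, pdI, Matrix.vecHead, Matrix.vecTail,
      div_eq_mul_inv, mul_inv, pow_two]) <;> (try ring)

/-- The inverse metric as a matrix of symbolic expressions. -/
def ginvE : Matrix (Fin 4) (Fin 4) KE :=
  !![C 1, C 0, C 0, mul (C 2) (mul V invX);
     C 0, C 1, C 0, C 0;
     C 0, C 0, C 0, C (-2);
     mul (C 2) (mul V invX), C 0, C (-2),
       add (mul (C 32) (mul X (hD []))) (mul (C 3) (mul V (mul V (mul invX invX))))]

lemma gKW_inv (h : (Fin 3 → ℝ) → ℝ) {p : Fin 4 → ℝ} (hp : p 0 ≠ 0) :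
    (gKW h p)⁻¹ = Matrix.of (fun i j => eval h (ginvE i j) p) := by
  apply Matrix.inv_eq_right_inv
  ext i j
  fin_cases i <;> fin_cases j <;>
    (try simp [Matrix.mul_apply, Fin.sum_univ_four, gKW, ginvE, eval, pdI,
      Matrix.vecHead, Matrix.vecTail, Matrix.one_apply]) <;>
    (try field_simp) <;> (try ring)

end KE

namespace KE

/-- Christoffel symbols as symbolic expressions: `ΓE k` is the matrix `Γ^k_{ij}`. -/
def ΓE : Fin 4 → Matrix (Fin 4) (Fin 4) KE :=
  ![!![C 0, C 0, mul (C (-1)) (mul V (mul invX invX)), C 0;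
      C 0, C 0, C 0, C 0;
      mul (C (-1)) (mul V (mul invX invX)), C 0,
        add (mul (C 4) (hD [])) (add (mul (C 4) (mul X (hD [0])))
          (mul (C (-(1/4))) (mul V (mul V (mul invX (mul invX invX)))))),
        mul (C (1/2)) invX;
      C 0, C 0, mul (C (1/2)) invX, C 0],
    !![C 0, C 0, C 0, C 0;
      C 0, C 0, C 0, C 0;
      C 0, C 0, mul (C 4) (mul X (hD [1])), C 0;
      C 0, C 0, C 0, C 0],
    !![C 0, C 0, invX, C 0;
      C 0, C 0, C 0, C 0;
      invX, C 0, mul (C (1/2)) (mul V (mul invX invX)), C 0;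
      C 0, C 0, C 0, C 0],
    !![mul (C 2) (mul V (mul invX invX)), C 0,
        add (mul (C (-8)) (hD [])) (add (mul (C 8) (mul X (hD [0])))
          (mul (C (-1)) (mul V (mul V (mul invX (mul invX invX)))))),
        mul (C (-1)) invX;
      C 0, C 0, mul (C 8) (mul X (hD [1])), C 0;
      add (mul (C (-8)) (hD [])) (add (mul (C 8) (mul X (hD [0])))
        (mul (C (-1)) (mul V (mul V (mul invX (mul invX invX)))))),
        mul (C 8) (mul X (hD [1])),
        add (mul (C 8) (mul X (hD [2]))) (add (mul (C 8) (mul V (hD [0])))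
          (mul (C (-(1/4))) (mul V (mul V (mul V (mul invX (mul invX (mul invX invX)))))))),
        mul (C (1/2)) (mul V (mul invX invX));
      mul (C (-1)) invX, C 0, mul (C (1/2)) (mul V (mul invX invX)), C 0]]

set_option maxHeartbeats 4000000 in
lemma christoffel_eval {h : (Fin 3 → ℝ) → ℝ} (hh : ContDiff ℝ (⊤ : ℕ∞) h) {p : Fin 4 → ℝ}
    (hp : p 0 ≠ 0) (k i j : Fin 4) :
    christoffel h p k i j = eval h (ΓE k i j) p := by
  have hg : ∀ a b : Fin 4, (fun q => gKW h q a b) = eval h (gE a b) := fun a b =>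
    funext fun q => gKW_eval h q a b
  have hpd : ∀ a b m : Fin 4, pd4 (fun q => gKW h q a b) m p = eval h (D (gE a b) m) p := by
    intro a b m
    rw [hg a b, pd4_eval hh _ hp]
  unfold christoffel
  rw [gKW_inv h hp]
  simp only [Matrix.of_apply, hpd, Fin.sum_univ_four]
  fin_cases k <;> fin_cases i <;> fin_cases j <;>
    (try simp [gE, ginvE, ΓE, eval, D, pdI, Matrix.vecHead, Matrix.vecTail]) <;>
    (try field_simp) <;> (try ring)

end KE

namespace KE

lemma pd4_christoffel {h : (Fin 3 → ℝ) → ℝ} (hh : ContDiff ℝ (⊤ : ℕ∞) h) {p : Fin 4 → ℝ}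
    (hp : p 0 ≠ 0) (k i j m : Fin 4) :
    pd4 (fun q => christoffel h q k i j) m p = eval h (D (ΓE k i j) m) p := by
  have hnhds : ∀ᶠ q in nhds p, q 0 ≠ 0 :=
    (isOpen_ne.preimage (continuous_apply 0)).mem_nhds hp
  have heq : (fun q => christoffel h q k i j) =ᶠ[nhds p] eval h (ΓE k i j) :=
    hnhds.mono fun q hq => christoffel_eval hh hq k i j
  rw [pd4, heq.fderiv_eq, ← pd4, pd4_eval hh _ hp]

lemma ricci_eval {h : (Fin 3 → ℝ) → ℝ} (hh : ContDiff ℝ (⊤ : ℕ∞) h) {p : Fin 4 → ℝ}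
    (hp : p 0 ≠ 0) (i j : Fin 4) :
    ricci h p i j = (∑ k, eval h (D (ΓE k i j) k) p)
      - (∑ k, eval h (D (ΓE k i k) j) p)
      + ∑ k, ∑ l, (eval h (ΓE k k l) p * eval h (ΓE l i j) p
        - eval h (ΓE k j l) p * eval h (ΓE l i k) p) := by
  unfold ricci
  simp only [pd4_christoffel hh hp, christoffel_eval hh hp]

set_option maxHeartbeats 4000000 in
lemma ricci_val {h : (Fin 3 → ℝ) → ℝ} (hh : ContDiff ℝ (⊤ : ℕ∞) h) {p : Fin 4 → ℝ}
    (hp : p 0 ≠ 0) (i j : Fin 4) :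
    ricci h p i j = if i = 2 ∧ j = 2 then
        4 * p 0 * (pd3 (fun q => pd3 h 0 q) 0 ![p 0, p 1, p 2]
          + pd3 (fun q => pd3 h 1 q) 1 ![p 0, p 1, p 2])
      else 0 := by
  rw [ricci_eval hh hp]
  fin_cases i <;> fin_cases j <;>
    (try simp [ΓE, eval, D, pdI, Fin.sum_univ_four, Matrix.vecHead, Matrix.vecTail]) <;>
    (try field_simp) <;> (try ring)

end KE

/-- The Kundt wave metric is Ricci-flat at a point with `x ≠ 0` if and only if
`h_xx + h_yy = 0` there. -/
theorem kundt_ricci_flat_iff_harmonic (h : (Fin 3 → ℝ) → ℝ) (hh : ContDiff ℝ (⊤ : ℕ∞) h) :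
    ∀ p : Fin 4 → ℝ, p 0 ≠ 0 →
      ((∀ i j, ricci h p i j = 0) ↔
        pd3 (fun q => pd3 h 0 q) 0 ![p 0, p 1, p 2]
          + pd3 (fun q => pd3 h 1 q) 1 ![p 0, p 1, p 2] = 0) := by
  intro p hp
  constructor
  · intro H
    have h22 := H 2 2
    rw [KE.ricci_val hh hp 2 2] at h22
    simp only [and_self, if_true] at h22
    rcases mul_eq_zero.1 h22 with h1 | h2
    · exact absurd (mul_eq_zero.1 h1) (by push_neg; exact ⟨by norm_num, hp⟩)
    · exact h2
  · intro hS i j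
    rw [KE.ricci_val hh hp i j]
    split
    · rw [hS, mul_zero]
    · rfl
end
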